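/- Let k be an algebraically closed field of characteristic p > 0, let V be a finite-dimensional k-vector space and let F be a bijective Frobenius-semilinear endomorphism of V. Then the set V^{F=id} = {v ∈ V : F(v) = v} of fixed vectors is an 𝔽_p-subspace of V, and the natural k-linear map k ⊗_{𝔽_p} V^{F=id} → V, c ⊗ v ↦ c • v, is bijective; in particular dim_{𝔽_p} V^{F=id} = dim_k V and the fixed vectors span V over k. -/

import Mathlib

/-!
Write `W` for the `k`-span of the fixed vectors. Since `k` is algebraically closed, both `F` and
`F - id` map `W` onto itself: on `∑ cᵢ xᵢ` with `F xᵢ = xᵢ` they act by `cᵢ ↦ cᵢ^p` and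
`cᵢ ↦ cᵢ^p - cᵢ`, which are surjective on `k`. Hence `F` induces an injective semilinear map on
`V ⧸ W`; a nonzero fixed vector `v + W` of it gives `F v - v ∈ W`, and subtracting a solution
`u ∈ W` of `F u - u = F v - v` yields a fixed vector `v - u ∉ W`. So `W = V` once every nonzero
space carries a nonzero fixed vector. For that, take `v ≠ 0` and the first relation
`F^{m+1} v = ∑_{i ≤ m} aᵢ F^i v`; injectivity of `F` forces `a₀ ≠ 0`, and a fixed vector in the
span of the `F^i v` amounts to a nonzero root of `P - X`, where `P` is a polynomial of degree
`p^{m+1}` in `X^p`. As `P - X` is separable it has `p^{m+1} ≥ 2` roots.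

A `k`-basis of fixed vectors `bᵢ` then finishes the proof: `F` raises coordinates to the `p`-th
power, so the fixed vectors are exactly the `𝔽_p`-combinations of the `bᵢ`.
-/

open Polynomial Function Submodule

section AlgClosed

variable {k : Type*} [Field k] [IsAlgClosed k]

theorem IsAlgClosed.exists_pow_sub_mul_eq {n : ℕ} (hn : 2 ≤ n) (μ c : k) :
    ∃ d : k, d ^ n - μ * d = c := by
  have hlt : (C μ * X : k[X]).natDegree < (X ^ n : k[X]).natDegree := by
    rw [natDegree_X_pow]
    exact ((natDegree_C_mul_le μ X).trans natDegree_X_le).trans_lt (by omega)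
  obtain ⟨d, hd⟩ := IsAlgClosed.eval_surjective (p := X ^ n - C μ * X)
    (by rw [natDegree_sub_eq_left_of_natDegree_lt hlt, natDegree_X_pow]; omega) c
  exact ⟨d, by simpa using hd⟩

theorem Polynomial.exists_ne_zero_eval_eq_self {P : k[X]} (hP : derivative P = 0)
    (hdeg : 1 < P.natDegree) : ∃ t ≠ 0, P.eval t = t := by
  classical
  have hQ : (P - X).natDegree = P.natDegree :=
    natDegree_sub_eq_left_of_natDegree_lt (by rwa [natDegree_X])
  have hsep : (P - X).Separable := by
    rw [separable_def, derivative_sub, hP, derivative_X, zero_sub]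
    exact isCoprime_one_right.neg_right
  have hcard : 1 < (P - X).roots.toFinset.card := by
    rwa [Multiset.toFinset_card_of_nodup (nodup_roots hsep),
      IsAlgClosed.card_roots_eq_natDegree, hQ]
  obtain ⟨t, ht, ht0⟩ := Finset.exists_mem_ne hcard 0
  refine ⟨t, ht0, ?_⟩
  rw [Multiset.mem_toFinset, mem_roots', IsRoot, eval_sub, eval_X, sub_eq_zero] at ht
  exact ht.2

end AlgClosed

section CharP

variable {p : ℕ} {k : Type*} [Field k]

theorem exists_algebraMap_eq_of_pow_eq_self [Fact p.Prime] [CharP k p] [Algebra (ZMod p) k]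
    {x : k} (hx : x ^ p = x) : ∃ c : ZMod p, algebraMap (ZMod p) k c = x := by
  have hx : x ∈ (ZMod.castHom dvd_rfl k).fieldRange := by
    rw [ZMod.fieldRange_castHom_eq_bot p]
    exact (Subfield.mem_bot_iff_pow_eq_self k p).2 hx
  obtain ⟨c, hc⟩ := hx
  exact ⟨c, by rwa [RingHom.ext_zmod (algebraMap (ZMod p) k) (ZMod.castHom dvd_rfl k)]⟩

variable (p) in
/-- If `F^{m+1} v = ∑_{i ≤ m} aᵢ F^i v` for a `p`-semilinear `F`, then `∑_{i ≤ m} cᵢ F^i v` is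
fixed by `F` exactly when `c₀ = a₀ c_m^p` and `c_{i+1} = cᵢ^p + a_{i+1} c_m^p`: so `cᵢ` is
`fixedCoeffPoly p a i` evaluated at `t = c_m`, subject to the one equation `c_m = t`. -/
noncomputable def fixedCoeffPoly (a : ℕ → k) : ℕ → k[X]
  | 0 => C (a 0) * X ^ p
  | i + 1 => fixedCoeffPoly a i ^ p + C (a (i + 1)) * X ^ p

theorem derivative_fixedCoeffPoly [CharP k p] (a : ℕ → k) (i : ℕ) :
    derivative (fixedCoeffPoly p a i) = 0 := by
  induction i with
  | zero => simp [fixedCoeffPoly, derivative_X_pow]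
  | succ i ih => simp [fixedCoeffPoly, derivative_pow, ih]

theorem natDegree_fixedCoeffPoly (hp : 1 < p) {a : ℕ → k} (ha : a 0 ≠ 0) (i : ℕ) :
    (fixedCoeffPoly p a i).natDegree = p ^ (i + 1) := by
  induction i with
  | zero => rw [fixedCoeffPoly, natDegree_C_mul_X_pow p _ ha, pow_one]
  | succ i ih =>
    have hlt : (C (a (i + 1)) * X ^ p).natDegree < (fixedCoeffPoly p a i ^ p).natDegree := by
      rw [natDegree_pow, ih, ← pow_succ']
      exact (natDegree_C_mul_X_pow_le _ _).trans_lt (lt_self_pow₀ hp (by omega))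
    rw [fixedCoeffPoly, natDegree_add_eq_left_of_natDegree_lt hlt, natDegree_pow, ih, ← pow_succ']

end CharP

theorem exists_mem_span_image_range {R M : Type*} [Ring R] [AddCommGroup M] [Module R M]
    [IsNoetherian R M] (u : ℕ → M) : ∃ n, u n ∈ span R (u '' Finset.range n) := by
  obtain ⟨n, hn⟩ := monotone_stabilizes_iff_noetherian.mpr ‹_›
    ⟨fun n => span R (u '' Finset.range n), fun m n h =>
      span_mono (Set.image_mono (by simpa using h))⟩
  have hstable : span R (u '' Finset.range (n + 1)) = span R (u '' Finset.range n) :=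
    (hn (n + 1) n.le_succ).symm
  exact ⟨n, hstable ▸ subset_span ⟨n, by simp, rfl⟩⟩

theorem sum_range_succ_smul_ne_zero {K M : Type*} [DivisionRing K] [AddCommGroup M] [Module K M]
    {u : ℕ → M} {m : ℕ} (hm : u m ∉ span K (u '' Finset.range m)) {c : ℕ → K} (hc : c m ≠ 0) :
    ∑ i ∈ Finset.range (m + 1), c i • u i ≠ 0 := by
  intro h
  rw [Finset.sum_range_succ, add_eq_zero_iff_neg_eq] at h
  refine hm ((smul_mem_iff _ hc).1 (h ▸ neg_mem (sum_mem fun i hi => smul_mem _ _ ?_)))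
  exact subset_span ⟨i, hi, rfl⟩

theorem LinearMap.bijective_liftBaseChange_of_basis {R A M N ι : Type*} [CommSemiring R]
    [CommSemiring A] [Algebra R A] [AddCommMonoid M] [Module R M] [AddCommMonoid N] [Module R N]
    [Module A N] [IsScalarTower R A N] (f : M →ₗ[R] N) (bM : Module.Basis ι R M)
    (bN : Module.Basis ι A N) (h : ∀ i, f (bM i) = bN i) : Bijective (f.liftBaseChange A) := by
  have : f.liftBaseChange A = ((bM.baseChange A).equiv bN (Equiv.refl ι)).toLinearMap :=
    (bM.baseChange A).ext fun i => by
      rw [LinearEquiv.coe_coe, Module.Basis.equiv_apply, Equiv.refl_apply,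
        Module.Basis.baseChange_apply, liftBaseChange_tmul, one_smul, h]
  exact this ▸ LinearEquiv.bijective _

section Semilinear

variable {p : ℕ} [Fact p.Prime] {k : Type*} [Field k] [CharP k p]
  {V : Type*} [AddCommGroup V] [Module k V] (F : V →ₛₗ[frobenius k p] V)

theorem map_sum_fixedCoeffPoly_smul {u : ℕ → V} (hu : ∀ i, F (u i) = u (i + 1)) {m : ℕ}
    {a : ℕ → k} (ha : u (m + 1) = ∑ i ∈ Finset.range (m + 1), a i • u i) {t : k}
    (ht : (fixedCoeffPoly p a m).eval t = t) :
    F (∑ i ∈ Finset.range (m + 1), (fixedCoeffPoly p a i).eval t • u i) =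
      ∑ i ∈ Finset.range (m + 1), (fixedCoeffPoly p a i).eval t • u i := by
  set c : ℕ → k := fun i => (fixedCoeffPoly p a i).eval t
  have hc0 : c 0 = a 0 * t ^ p := by simp [c, fixedCoeffPoly]
  have hc : ∀ i, c (i + 1) = c i ^ p + a (i + 1) * t ^ p := fun i => by
    simp [c, fixedCoeffPoly]
  calc F (∑ i ∈ Finset.range (m + 1), c i • u i)
      = ∑ i ∈ Finset.range m, c i ^ p • u (i + 1) + t ^ p • u (m + 1) := by
        simp [map_sum, hu, Finset.sum_range_succ, frobenius_def, c, ht]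
    _ = ∑ i ∈ Finset.range (m + 1), c i • u i := by
        rw [ha, Finset.smul_sum, Finset.sum_range_succ' _ m,
          Finset.sum_range_succ' (fun i => c i • u i), ← add_assoc, ← Finset.sum_add_distrib]
        simp only [hc0, hc, add_smul, mul_smul, smul_comm (t ^ p)]

theorem span_fixed_le_comap : span k {v | F v = v} ≤ (span k {v | F v = v}).comap F :=
  span_le.2 fun v hv => by simpa [hv.out] using subset_span hv

variable {F} in
theorem repr_map_eq_pow_of_basis_fixed {ι : Type*} [Fintype ι] {b : Module.Basis ι k V}
    (hb : ∀ i, F (b i) = b i) (v : V) (i : ι) : b.repr (F v) i = b.repr v i ^ p := by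
  have hFv : F v = b.equivFun.symm fun i => b.repr v i ^ p := by
    conv_lhs => rw [← b.sum_repr v]
    simp only [map_sum, map_smulₛₗ, hb, frobenius_def, b.equivFun_symm_apply]
  rw [hFv, ← b.equivFun_apply, LinearEquiv.apply_symm_apply]

variable [IsAlgClosed k]

-- Taking `p`-th roots of `a₁, …, a_m` writes `F^{m+1} v` as `F` of a combination of `F^i v`, `i < m`.
theorem mem_span_image_range_of_coeff_zero_eq_zero (hF : Injective F) {u : ℕ → V}
    (hu : ∀ i, F (u i) = u (i + 1)) {m : ℕ} {a : ℕ → k}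
    (ha : u (m + 1) = ∑ i ∈ Finset.range (m + 1), a i • u i) (ha0 : a 0 = 0) :
    u m ∈ span k (u '' Finset.range m) := by
  choose b hb using fun i => IsAlgClosed.exists_pow_nat_eq (a (i + 1)) (Fact.out : p.Prime).pos
  have hFm : F (u m) = F (∑ i ∈ Finset.range m, b i • u i) := by
    simp [hu, ha, Finset.sum_range_succ', ha0, frobenius_def, hb]
  rw [hF hFm]
  exact sum_mem fun i hi => smul_mem _ _ (subset_span ⟨i, hi, rfl⟩)

theorem exists_ne_zero_map_eq_self [FiniteDimensional k V] [Nontrivial V] (hF : Injective F) :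
    ∃ w ≠ 0, F w = w := by
  classical
  obtain ⟨v, hv⟩ := exists_ne (0 : V)
  set u : ℕ → V := fun i => F^[i] v
  have hu : ∀ i, F (u i) = u (i + 1) := fun i => (iterate_succ_apply' F i v).symm
  have hex := exists_mem_span_image_range (R := k) u
  have hmin : ∀ m < Nat.find hex, u m ∉ span k (u '' Finset.range m) :=
    fun m => Nat.find_min hex
  obtain ⟨m, hm⟩ : ∃ m, Nat.find hex = m + 1 := Nat.exists_eq_add_one.mpr <|
    Nat.pos_of_ne_zero fun h => hv <| by
      have h0 := Nat.find_spec hex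
      rw [h] at h0
      simpa [u] using h0
  obtain ⟨a, ha⟩ := (mem_span_image_finset_iff_exists_fun' k).1 (hm ▸ Nat.find_spec hex)
  have ha0 : a 0 ≠ 0 := fun h0 =>
    hmin m (by omega) (mem_span_image_range_of_coeff_zero_eq_zero F hF hu ha.symm h0)
  have hp := (Fact.out : p.Prime).one_lt
  obtain ⟨t, ht0, ht⟩ := exists_ne_zero_eval_eq_self (derivative_fixedCoeffPoly a m)
    (by rw [natDegree_fixedCoeffPoly hp ha0]; exact Nat.one_lt_pow (by omega) hp)
  exact ⟨_, sum_range_succ_smul_ne_zero (hmin m (by omega)) (by rwa [ht]),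
    map_sum_fixedCoeffPoly_smul F hu ha.symm ht⟩

theorem exists_mem_span_fixed_map_sub_smul_eq (μ : k) {w : V}
    (hw : w ∈ span k {v | F v = v}) : ∃ u ∈ span k {v | F v = v}, F u - μ • u = w := by
  obtain ⟨n, c, x, rfl⟩ := mem_span_set'.1 hw
  choose d hd using fun i =>
    IsAlgClosed.exists_pow_sub_mul_eq (Fact.out : p.Prime).two_le μ (c i)
  refine ⟨∑ i, d i • (x i : V), sum_mem fun i _ => smul_mem _ _ (subset_span (x i).2), ?_⟩
  simp [map_sum, frobenius_def, (x _).2.out, Finset.smul_sum, ← Finset.sum_sub_distrib, smul_smul,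
    ← sub_smul, hd]

theorem span_fixed_eq_top [FiniteDimensional k V] (hF : Injective F) :
    span k {v | F v = v} = ⊤ := by
  set W := span k {v | F v = v}
  by_contra hW
  have : Nontrivial (V ⧸ W) := Quotient.nontrivial_iff.2 hW
  let G := W.mapQ W F (span_fixed_le_comap F)
  have hG : Injective G := by
    rw [← LinearMap.ker_eq_bot, eq_bot_iff]
    rintro x hx
    obtain ⟨v, rfl⟩ := W.mkQ_surjective x
    obtain ⟨u, hu, hFu⟩ :=
      exists_mem_span_fixed_map_sub_smul_eq F 0 ((Quotient.mk_eq_zero W).1 hx)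
    simp only [zero_smul, sub_zero] at hFu
    exact (Quotient.mk_eq_zero W).2 (hF hFu ▸ hu)
  obtain ⟨x, hx0, hx⟩ := exists_ne_zero_map_eq_self G hG
  obtain ⟨v, rfl⟩ := W.mkQ_surjective x
  obtain ⟨u, hu, hFu⟩ :=
    exists_mem_span_fixed_map_sub_smul_eq F 1 ((Submodule.Quotient.eq W).1 hx)
  have hfix : v - u ∈ W := subset_span <| show F (v - u) = v - u by
    rw [map_sub, sub_eq_sub_iff_sub_eq_sub, ← hFu, one_smul]
  exact hx0 ((Quotient.mk_eq_zero W).2 (by simpa using add_mem hfix hu))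

end Semilinear

section FixedSubmodule

variable {p : ℕ} [Fact p.Prime] {k : Type*} [Field k] [CharP k p] [Algebra (ZMod p) k]
  {V : Type*} [AddCommGroup V] [Module k V] [Module (ZMod p) V] [IsScalarTower (ZMod p) k V]
  (F : V →ₛₗ[frobenius k p] V)

def fixedSubmodule : Submodule (ZMod p) V where
  carrier := {v | F v = v}
  add_mem' hv hw := by simp_all
  zero_mem' := map_zero F
  smul_mem' c v hv := by
    change F (c • v) = c • v
    rw [← algebraMap_smul k c v, map_smulₛₗ, frobenius_def, ← map_pow, ZMod.pow_card, hv.out]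

variable {F}

noncomputable def fixedBasis {ι : Type*} [Fintype ι] (b : Module.Basis ι k V)
    (hb : ∀ i, F (b i) = b i) : Module.Basis ι (ZMod p) (fixedSubmodule F) :=
  Module.Basis.mk (v := fun i => ⟨b i, hb i⟩)
    (LinearIndependent.of_comp (fixedSubmodule F).subtype
      (b.linearIndependent.restrict_scalars' (ZMod p)))
    (by
      rintro ⟨v, hv⟩ -
      choose c hc using fun i => exists_algebraMap_eq_of_pow_eq_self
        ((repr_map_eq_pow_of_basis_fixed hb v i).symm.trans (congrArg (b.repr · i) hv.out))
      refine (mem_span_range_iff_exists_fun _).2 ⟨c, Subtype.ext ?_⟩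
      calc _ = ∑ i, b.repr v i • b i := by simp [← hc, algebraMap_smul]
        _ = v := b.sum_repr v)

theorem fixedBasis_apply {ι : Type*} [Fintype ι] (b : Module.Basis ι k V)
    (hb : ∀ i, F (b i) = b i) (i : ι) : (fixedBasis b hb i : V) = b i := by
  simp [fixedBasis]

end FixedSubmodule

open scoped TensorProduct

theorem stmt_3 (p : ℕ) [Fact p.Prime] (k : Type*) [Field k] [CharP k p] [IsAlgClosed k]
    [Algebra (ZMod p) k]
    (V : Type*) [AddCommGroup V] [Module k V] [FiniteDimensional k V]
    [Module (ZMod p) V] [IsScalarTower (ZMod p) k V]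
    (F : V → V) (hFbij : Function.Bijective F)
    (hFadd : ∀ x y : V, F (x + y) = F x + F y)
    (hFsmul : ∀ (c : k) (v : V), F (c • v) = c ^ p • F v) :
    ∃ S : Submodule (ZMod p) V,
      (S : Set V) = {v : V | F v = v} ∧
      (∃ g : k ⊗[ZMod p] S →ₗ[k] V,
        (∀ (c : k) (w : S), g (c ⊗ₜ[ZMod p] w) = c • (w : V)) ∧ Function.Bijective g) ∧
      Module.finrank (ZMod p) S = Module.finrank k V ∧
      Submodule.span k {v : V | F v = v} = ⊤ := by
  let Φ : V →ₛₗ[frobenius k p] V := { toFun := F, map_add' := hFadd, map_smul' := hFsmul }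
  have hspan : span k {v | F v = v} = ⊤ := span_fixed_eq_top Φ hFbij.injective
  let b := Module.Basis.ofSpan hspan.ge
  have hb : ∀ i, Φ (b i) = b i := fun i => Module.Basis.ofSpan_subset hspan.ge ⟨i, rfl⟩
  have := FiniteDimensional.fintypeBasisIndex b
  let bS := fixedBasis b hb
  refine ⟨fixedSubmodule Φ, rfl, ⟨(fixedSubmodule Φ).subtype.liftBaseChange k,
    fun c w => LinearMap.liftBaseChange_tmul _ _ _ _,
    LinearMap.bijective_liftBaseChange_of_basis _ bS b (fixedBasis_apply b hb)⟩, ?_, hspan⟩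
  rw [Module.finrank_eq_card_basis bS, Module.finrank_eq_card_basis b]
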